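/- arXiv:1806.02927 — 3 statements merged into one kernel-verified Lean document; each statement's English description precedes it below -/
import Mathlib

section
/- Let (e_t)_{t≥0} and (d_t)_{t≥0} be nonnegative sequences with η_t d_{t-1} ≤ (1 - η_t μ) e_{t-1} - e_t + η_t^2 σ^2 for all t ≥ 1, where η_t = 2/(μ(γ+t)) and γ > 0. Then for all T ≥ 1, (2/(T(2γ+T-1))) Σ_{t=1}^{T} (γ+t-1) d_{t-1} ≤ μγ(γ-1) e_0 / (T(2γ+T-1)) + 4σ^2/(μ(2γ+T-1)). -/
/-!
Multiplying the recursion at step `t = s + 1` by `μ c (c - 1) / 2`, where `c = γ + s + 1` and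
`η = 2 / (μ c)`, turns it into `(γ + s) d_s ≤ Φ s - Φ (s + 1) + 2σ²/μ` for the potential
`Φ n = μ (γ + n - 1)(γ + n) e_n / 2`. Summing telescopes, `Φ T ≥ 0` is dropped, and dividing
by `T (2γ + T - 1) / 2 = ∑_{t=1}^T (γ + t - 1)` gives the bound.
-/

open Finset

lemma weighted_descent_step {d e e' μ σ c : ℝ} (hμ : 0 < μ) (hc : 1 ≤ c)
    (h : 2 / (μ * c) * d ≤ (1 - 2 / (μ * c) * μ) * e - e' + (2 / (μ * c)) ^ 2 * σ ^ 2) :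
    (c - 1) * d ≤ μ / 2 * (c - 2) * (c - 1) * e - μ / 2 * (c - 1) * c * e' + 2 * σ ^ 2 / μ := by
  have hc₀ : 0 < c := by linarith
  have hw : 0 ≤ μ * c * (c - 1) / 2 := by have := mul_pos hμ hc₀; nlinarith
  have hmul := mul_le_mul_of_nonneg_left h hw
  have hlhs : μ * c * (c - 1) / 2 * (2 / (μ * c) * d) = (c - 1) * d := by field_simp
  have hrhs : μ * c * (c - 1) / 2 * ((1 - 2 / (μ * c) * μ) * e - e' + (2 / (μ * c)) ^ 2 * σ ^ 2)
      = μ / 2 * (c - 2) * (c - 1) * e - μ / 2 * (c - 1) * c * e'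
        + (c - 1) / c * (2 * σ ^ 2 / μ) := by
    field_simp
  have hnoise : (c - 1) / c * (2 * σ ^ 2 / μ) ≤ 2 * σ ^ 2 / μ := by
    apply mul_le_of_le_one_left (by positivity)
    rw [div_le_one hc₀]
    linarith
  linarith

lemma sum_range_le_of_le_sub_add {a Φ : ℕ → ℝ} {C : ℝ} (h : ∀ s, a s ≤ Φ s - Φ (s + 1) + C)
    (T : ℕ) : ∑ s ∈ range T, a s ≤ Φ 0 - Φ T + T * C := by
  calc ∑ s ∈ range T, a s ≤ ∑ s ∈ range T, (Φ s - Φ (s + 1) + C) := sum_le_sum fun s _ => h s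
    _ = Φ 0 - Φ T + T * C := by
      rw [sum_add_distrib, sum_range_sub', sum_const, card_range, nsmul_eq_mul]

lemma sum_Icc_one_eq_sum_range {M : Type*} [AddCommMonoid M] (f : ℕ → M) (T : ℕ) :
    ∑ t ∈ Icc 1 T, f t = ∑ s ∈ range T, f (s + 1) := by
  induction T with
  | zero => simp
  | succ n ih => rw [sum_Icc_succ_top (by omega), ih, sum_range_succ]

theorem stmt_11_general (e d : ℕ → ℝ) (μ σ γ : ℝ)
    (hμ : 0 < μ) (hγ : 0 < γ)
    (henn : ∀ t, 0 ≤ e t)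
    (η : ℕ → ℝ) (hη : ∀ t, η t = 2 / (μ * (γ + t)))
    (hrec : ∀ t : ℕ, 1 ≤ t →
      η t * d (t - 1) ≤ (1 - η t * μ) * e (t - 1) - e t + (η t) ^ 2 * σ ^ 2) :
    ∀ T : ℕ, 1 ≤ T →
      (2 / (T * (2 * γ + T - 1))) * ∑ t ∈ Icc 1 T, (γ + t - 1) * d (t - 1)
        ≤ μ * γ * (γ - 1) * e 0 / (T * (2 * γ + T - 1))
          + 4 * σ ^ 2 / (μ * (2 * γ + T - 1)) := by
  intro T hT
  set Φ : ℕ → ℝ := fun n => μ / 2 * (γ + n - 1) * (γ + n) * e n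
  have hstep : ∀ s : ℕ, (γ + ↑(s + 1) - 1) * d s ≤ Φ s - Φ (s + 1) + 2 * σ ^ 2 / μ := by
    intro s
    have h := hrec (s + 1) (by omega)
    rw [hη, Nat.add_sub_cancel] at h
    have hs := weighted_descent_step hμ (by push_cast; linarith [s.cast_nonneg (α := ℝ)]) h
    simp only [Φ]
    push_cast at hs ⊢
    linear_combination hs
  have hT₁ : (1 : ℝ) ≤ T := by exact_mod_cast hT
  have hΦT : 0 ≤ Φ T := by
    have : 0 ≤ γ + (T : ℝ) - 1 := by linarith
    have := henn T
    positivity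
  have hsum : ∑ t ∈ Icc 1 T, (γ + t - 1) * d (t - 1) ≤ Φ 0 + T * (2 * σ ^ 2 / μ) := by
    rw [sum_Icc_one_eq_sum_range]
    have := sum_range_le_of_le_sub_add hstep T
    simp only [Nat.add_sub_cancel]
    linarith
  have hD : 0 < 2 * γ + (T : ℝ) - 1 := by linarith
  calc (2 / (T * (2 * γ + T - 1))) * ∑ t ∈ Icc 1 T, (γ + t - 1) * d (t - 1)
      ≤ (2 / (T * (2 * γ + T - 1))) * (Φ 0 + T * (2 * σ ^ 2 / μ)) := by gcongr
    _ = μ * γ * (γ - 1) * e 0 / (T * (2 * γ + T - 1)) + 4 * σ ^ 2 / (μ * (2 * γ + T - 1)) := by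
      simp only [Φ, Nat.cast_zero, add_zero]
      field_simp
      ring

theorem stmt_11 (e d : ℕ → ℝ) (μ σ γ : ℝ)
    (hμ : 0 < μ) (hγ : 0 < γ)
    (henn : ∀ t, 0 ≤ e t) (hdnn : ∀ t, 0 ≤ d t)
    (η : ℕ → ℝ) (hη : ∀ t, η t = 2 / (μ * (γ + t)))
    (hrec : ∀ t : ℕ, 1 ≤ t →
      η t * d (t - 1) ≤ (1 - η t * μ) * e (t - 1) - e t + (η t) ^ 2 * σ ^ 2) :
    ∀ T : ℕ, 1 ≤ T →
      (2 / (T * (2 * γ + T - 1))) * ∑ t ∈ Icc 1 T, (γ + t - 1) * d (t - 1)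
        ≤ μ * γ * (γ - 1) * e 0 / (T * (2 * γ + T - 1))
          + 4 * σ ^ 2 / (μ * (2 * γ + T - 1)) :=
  stmt_11_general e d μ σ γ hμ hγ henn η hη hrec
end

section
/- Suppose each f_i : R^d → R (i = 1, ..., n) is μ-strongly convex and L-smooth, and let F = (1/n) Σ f_i with minimizer considerations. Then for all θ, θ*: ⟨∇F(θ), θ* - θ⟩ ≤ ((L-μ)/L)[F(θ*) - F(θ)] - (μ/2)||θ - θ*||^2 - (1/(2nL)) Σ_{i=1}^n ||∇f_i(θ) - ∇f_i(θ*)||^2 - (μ/L)⟨∇F(θ*), θ - θ*⟩. -/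
open Finset
open scoped RealInnerProductSpace

/-!
Write `D_f(x, y) = f y - f x - ⟪∇f x, y - x⟫` for the Bregman divergence. Strong convexity and the
descent lemma (from the `L`-Lipschitz gradient) say `μ/2 ‖y - x‖² ≤ D_f(x, y) ≤ L/2 ‖y - x‖²`, so
`h = f - μ/2 ‖·‖²` satisfies `0 ≤ D_h ≤ (L - μ)/2 ‖y - x‖²`. Comparing both bounds at the points
`y - t (∇h y - ∇h x)` through the three-point identity gives a quadratic in `t` that is nonnegative,
and its discriminant yields co-coercivity `‖∇h y - ∇h x‖² ≤ 2 (L - μ) D_h(x, y)`. Expanding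
`∇h = ∇f - μ id` gives the inequality for each `f i`, and it survives averaging over `i`.
-/

theorem le_add_add_half_of_hasDerivAt_le {φ φ' : ℝ → ℝ} {a b : ℝ}
    (hφ : ∀ t, HasDerivAt φ (φ' t) t) (hle : ∀ t ∈ Set.Ico (0 : ℝ) 1, φ' t ≤ a + b * t) :
    φ 1 ≤ φ 0 + a + b / 2 := by
  have hB : ∀ t, HasDerivAt (fun t => φ 0 + a * t + b / 2 * t ^ 2) (a + b * t) t := by
    intro t
    refine ((((hasDerivAt_id t).const_mul a).const_add (φ 0)).add
      ((hasDerivAt_pow 2 t).const_mul (b / 2))).congr_deriv ?_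
    simp only [mul_one, Nat.cast_ofNat]
    ring
  have := image_le_of_deriv_right_le_deriv_boundary (a := 0) (b := 1)
    (fun t _ => (hφ t).continuousAt.continuousWithinAt) (fun t _ => (hφ t).hasDerivWithinAt)
    (by simp) (fun t _ => (hB t).continuousAt.continuousWithinAt)
    (fun t _ => (hB t).hasDerivWithinAt) hle (Set.right_mem_Icc.2 zero_le_one)
  simpa using this

section Bregman

variable {E : Type*} [NormedAddCommGroup E] [InnerProductSpace ℝ E]

def bregman (f : E → ℝ) (g : E → E) (x y : E) : ℝ :=
  f y - f x - ⟪g x, y - x⟫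

theorem bregman_add_bregman (f : E → ℝ) (g : E → E) (x y z : E) :
    bregman f g x y + bregman f g y z + ⟪g y - g x, z - y⟫ = bregman f g x z := by
  simp only [bregman, inner_sub_left, inner_sub_right]
  ring

theorem bregman_sub_sq_norm (f : E → ℝ) (g : E → E) (μ : ℝ) (x y : E) :
    bregman (fun x => f x - μ / 2 * ‖x‖ ^ 2) (fun x => g x - μ • x) x y
      = bregman f g x y - μ / 2 * ‖y - x‖ ^ 2 := by
  simp only [bregman, inner_sub_left, inner_sub_right, real_inner_smul_left, norm_sub_sq_real,
    real_inner_self_eq_norm_sq, real_inner_comm x y]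
  ring

theorem sq_norm_sub_le_two_mul_bregman {h : E → ℝ} {g : E → E} {K : ℝ} (hK : 0 ≤ K)
    (hconv : ∀ x y, 0 ≤ bregman h g x y) (hsmooth : ∀ x y, bregman h g x y ≤ K / 2 * ‖y - x‖ ^ 2)
    (x y : E) : ‖g y - g x‖ ^ 2 ≤ 2 * K * bregman h g x y := by
  set w := g y - g x
  set D := bregman h g x y
  have hquad : ∀ t : ℝ, 0 ≤ K / 2 * ‖w‖ ^ 2 * (t * t) + (-‖w‖ ^ 2) * t + D := by
    intro t
    have hthree : D + bregman h g y (y - t • w) + ⟪w, y - t • w - y⟫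
        = bregman h g x (y - t • w) :=
      bregman_add_bregman h g x y _
    have hxz := hconv x (y - t • w)
    have hyz := hsmooth y (y - t • w)
    simp only [sub_sub_cancel_left, norm_neg, norm_smul, inner_neg_right, real_inner_smul_right,
      real_inner_self_eq_norm_sq, Real.norm_eq_abs, mul_pow, sq_abs] at hthree hyz
    nlinarith
  have hdisc := discrim_le_zero hquad
  have hD : 0 ≤ D := hconv x y
  rw [discrim] at hdisc
  nlinarith [sq_nonneg ‖w‖, mul_nonneg hK hD]

theorem bregman_le_of_lipschitz_gradient [CompleteSpace E] {f : E → ℝ} {g : E → E} {L : ℝ}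
    (hf : ∀ x, HasGradientAt f (g x) x) (hg : ∀ x y, ‖g x - g y‖ ≤ L * ‖x - y‖) (x y : E) :
    bregman f g x y ≤ L / 2 * ‖y - x‖ ^ 2 := by
  set v := y - x
  have hline : ∀ t : ℝ, HasDerivAt (fun t : ℝ => f (x + t • v)) ⟪g (x + t • v), v⟫ t := by
    intro t
    have := (hf (x + t • v)).hasFDerivAt.comp_hasDerivAt t
      (((hasDerivAt_id t).smul_const v).const_add x)
    simpa [Function.comp_def] using this
  have hslope : ∀ t ∈ Set.Ico (0 : ℝ) 1, ⟪g (x + t • v), v⟫ ≤ ⟪g x, v⟫ + L * ‖v‖ ^ 2 * t := by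
    rintro t ⟨ht, -⟩
    have hgt : ‖g (x + t • v) - g x‖ ≤ L * t * ‖v‖ := by
      simpa [norm_smul, abs_of_nonneg ht, mul_assoc] using hg (x + t • v) x
    calc ⟪g (x + t • v), v⟫ = ⟪g x, v⟫ + ⟪g (x + t • v) - g x, v⟫ := by
          rw [inner_sub_left]; ring
      _ ≤ ⟪g x, v⟫ + ‖g (x + t • v) - g x‖ * ‖v‖ := by gcongr; exact real_inner_le_norm _ _
      _ ≤ ⟪g x, v⟫ + L * t * ‖v‖ * ‖v‖ := by gcongr
      _ = ⟪g x, v⟫ + L * ‖v‖ ^ 2 * t := by ring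
  have := le_add_add_half_of_hasDerivAt_le hline hslope
  simp only [zero_smul, add_zero, one_smul, add_sub_cancel, v] at this
  simp only [bregman]
  linarith

theorem inner_le_of_bregman_bounds {f : E → ℝ} {g : E → E} {μ L : ℝ} (hL : 0 < L) (hμL : μ ≤ L)
    (hsc : ∀ x y, μ / 2 * ‖y - x‖ ^ 2 ≤ bregman f g x y)
    (hsmooth : ∀ x y, bregman f g x y ≤ L / 2 * ‖y - x‖ ^ 2) (x y : E) :
    ⟪g x, y - x⟫ ≤ (L - μ) / L * (f y - f x) - μ / 2 * ‖x - y‖ ^ 2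
      - 1 / (2 * L) * ‖g x - g y‖ ^ 2 - μ / L * ⟪g y, x - y⟫ := by
  -- co-coercivity of the gradient of the convex, `(L - μ)`-smooth function `f - μ/2 ‖·‖²`
  have hco := sq_norm_sub_le_two_mul_bregman (h := fun x => f x - μ / 2 * ‖x‖ ^ 2)
    (g := fun x => g x - μ • x) (sub_nonneg.2 hμL)
    (fun x y => by rw [bregman_sub_sq_norm]; linarith [hsc x y])
    (fun x y => by rw [bregman_sub_sq_norm]; linarith [hsmooth x y]) x y
  rw [bregman_sub_sq_norm, show g y - μ • y - (g x - μ • x) = (g y - g x) - μ • (y - x) by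
    rw [smul_sub]; abel, norm_sub_sq_real, real_inner_smul_right, inner_sub_left, norm_smul,
    Real.norm_eq_abs, mul_pow, sq_abs, bregman] at hco
  rw [norm_sub_rev x y, norm_sub_rev (g x) (g y), ← neg_sub y x, inner_neg_right, ← sub_nonneg]
  have hrhs : (L - μ) / L * (f y - f x) - μ / 2 * ‖y - x‖ ^ 2 - 1 / (2 * L) * ‖g y - g x‖ ^ 2
      - μ / L * -⟪g y, y - x⟫ - ⟪g x, y - x⟫
      = ((L - μ) * (f y - f x) - L * μ / 2 * ‖y - x‖ ^ 2 - 1 / 2 * ‖g y - g x‖ ^ 2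
        + μ * ⟪g y, y - x⟫ - L * ⟪g x, y - x⟫) / L := by
    field_simp
    ring
  rw [hrhs]
  apply div_nonneg _ hL.le
  linarith

end Bregman

theorem stmt_16 {d n : ℕ} (hn : 0 < n)
    (f : Fin n → EuclideanSpace ℝ (Fin d) → ℝ)
    (g : Fin n → EuclideanSpace ℝ (Fin d) → EuclideanSpace ℝ (Fin d))
    (hdiff : ∀ i x, HasGradientAt (f i) (g i x) x)
    (μ L : ℝ) (hμ : 0 < μ) (hμL : μ ≤ L)
    (hsc : ∀ i x y, f i y ≥ f i x + ⟪g i x, y - x⟫ + μ / 2 * ‖y - x‖ ^ 2)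
    (hsmooth : ∀ i x y, ‖g i x - g i y‖ ≤ L * ‖x - y‖)
    (F : EuclideanSpace ℝ (Fin d) → ℝ) (hF : ∀ x, F x = (n : ℝ)⁻¹ * ∑ i, f i x)
    (gradF : EuclideanSpace ℝ (Fin d) → EuclideanSpace ℝ (Fin d))
    (hgradF : ∀ x, gradF x = (n : ℝ)⁻¹ • ∑ i, g i x) :
    ∀ θ θstar : EuclideanSpace ℝ (Fin d),
      ⟪gradF θ, θstar - θ⟫
        ≤ (L - μ) / L * (F θstar - F θ) - μ / 2 * ‖θ - θstar‖ ^ 2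
          - (1 / (2 * n * L)) * ∑ i, ‖g i θ - g i θstar‖ ^ 2
          - μ / L * ⟪gradF θstar, θ - θstar⟫ := by
  intro θ θstar
  have hL : 0 < L := hμ.trans_le hμL
  have hn' : (n : ℝ) ≠ 0 := by positivity
  have hi : ∀ i, ⟪g i θ, θstar - θ⟫ ≤ (L - μ) / L * (f i θstar - f i θ)
      - μ / 2 * ‖θ - θstar‖ ^ 2 - 1 / (2 * L) * ‖g i θ - g i θstar‖ ^ 2
      - μ / L * ⟪g i θstar, θ - θstar⟫ := fun i =>
    inner_le_of_bregman_bounds hL hμL (fun x y => by simp only [bregman]; linarith [hsc i x y])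
      (bregman_le_of_lipschitz_gradient (hdiff i) (hsmooth i)) θ θstar
  rw [hgradF, hgradF, hF, hF, real_inner_smul_left, real_inner_smul_left, sum_inner, sum_inner]
  calc (n : ℝ)⁻¹ * ∑ i, ⟪g i θ, θstar - θ⟫
      ≤ (n : ℝ)⁻¹ * ∑ i, ((L - μ) / L * (f i θstar - f i θ)
      - μ / 2 * ‖θ - θstar‖ ^ 2 - 1 / (2 * L) * ‖g i θ - g i θstar‖ ^ 2
      - μ / L * ⟪g i θstar, θ - θstar⟫) := by gcongr with i; exact hi i
    _ = _ := by
      simp only [sum_sub_distrib, ← mul_sum, sum_const, card_univ, Fintype.card_fin, nsmul_eq_mul]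
      field_simp
end

section
/- Let s_t be defined by s_1 = 0 and s_{t+1} = (1 - β_t) s_t + β_t b_t, where b_t are i.i.d. nonnegative random variables with mean m and variance at most σ_b^2, and β_t = 1/t^{c} with 1/2 < c ≤ 1. Then E[(s_t - m)^2] ≤ σ_b^2/(t-1)^{c} for all t ≥ 2, and hence E[s_t^2] ≤ m^2 + σ_b^2/(t-1)^{c}. -/
/-!
After centering, `s_{t+1} - m = (1 - β_t)(s_t - m) + β_t (b_t - m)`. Since `s_t` is a measurable
function of `b_1, …, b_{t-1}`, it is independent of `b_t`, so the cross term has mean zero and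
`V_{t+1} = (1 - β_t)² V_t + β_t² Var(b_t)` for `V_t = E[(s_t - m)²]`. As `β_1 = 1`, `V_2 ≤ σ_b²`,
and the bound `V_t ≤ σ_b² / (t-1)^c` propagates because `t^c - 1 ≤ (t-1)^c` for `0 ≤ c ≤ 1`.
For the second moment, `E[s_t²] = V_t + 2m E[s_t - m] + m²`, and `m E[s_t - m] ≤ 0` holds at
`s_1 = 0` and is preserved by the recursion since `1 - β_t ≥ 0`.
-/

open MeasureTheory ProbabilityTheory

lemma rpow_sub_one_le_sub_one_rpow {x c : ℝ} (hx : 1 ≤ x) (hc0 : 0 ≤ c) (hc1 : c ≤ 1) :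
    x ^ c - 1 ≤ (x - 1) ^ c := by
  have := Real.rpow_add_le_add_rpow (sub_nonneg.2 hx) zero_le_one hc0 hc1
  simp only [sub_add_cancel, Real.one_rpow] at this
  linarith

lemma one_sub_one_div_rpow_sq_mul_add_le {x c w : ℝ} (hx : 1 < x) (hc0 : 0 ≤ c) (hc1 : c ≤ 1)
    (hw : 0 ≤ w) :
    (1 - 1 / x ^ c) ^ 2 * (w / (x - 1) ^ c) + (1 / x ^ c) ^ 2 * w ≤ w / x ^ c := by
  set a := x ^ c
  set v := (x - 1) ^ c
  have ha1 : 1 ≤ a := Real.one_le_rpow hx.le hc0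
  have hv0 : 0 < v := Real.rpow_pos_of_pos (by linarith) c
  have hav : a - 1 ≤ v := rpow_sub_one_le_sub_one_rpow hx.le hc0 hc1
  have hkey : (a - 1) ^ 2 + v ≤ a * v := by nlinarith
  have hlhs : (1 - 1 / a) ^ 2 * (w / v) + (1 / a) ^ 2 * w =
      w * ((a - 1) ^ 2 + v) / (a ^ 2 * v) := by
    field_simp
  have hrhs : w / a = w * (a * v) / (a ^ 2 * v) := by field_simp
  rw [hlhs, hrhs]
  gcongr

lemma le_div_sub_one_rpow_of_recursion {c w : ℝ} (hc0 : 0 ≤ c) (hc1 : c ≤ 1) (hw : 0 ≤ w)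
    {β V W : ℕ → ℝ} (hβ : ∀ t : ℕ, β t = 1 / (t : ℝ) ^ c) (hW : ∀ t, W t ≤ w)
    (hV : ∀ t, 1 ≤ t → V (t + 1) = (1 - β t) ^ 2 * V t + β t ^ 2 * W t) :
    ∀ t, 2 ≤ t → V t ≤ w / ((t : ℝ) - 1) ^ c := by
  intro t ht
  induction t, ht using Nat.le_induction with
  | base =>
    have hβ1 : β 1 = 1 := by simp [hβ]
    norm_num [hV 1 le_rfl, hβ1, hW 1]
  | succ n hn ih =>
    have hn' : (1 : ℝ) < n := by exact_mod_cast hn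
    calc V (n + 1) = (1 - β n) ^ 2 * V n + β n ^ 2 * W n := hV n (by omega)
      _ ≤ (1 - β n) ^ 2 * (w / ((n : ℝ) - 1) ^ c) + β n ^ 2 * w := by gcongr; exact hW n
      _ ≤ w / (n : ℝ) ^ c := by rw [hβ]; exact one_sub_one_div_rpow_sq_mul_add_le hn' hc0 hc1 hw
      _ = w / (((n + 1 : ℕ) : ℝ) - 1) ^ c := by push_cast; ring_nf

section Moments

variable {Ω : Type*} [MeasurableSpace Ω] {μ : Measure Ω}

lemma integral_sq_add_of_indepFun {X Y : Ω → ℝ} (hXY : IndepFun X Y μ) (hX : MemLp X 2 μ)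
    (hY : MemLp Y 2 μ) (hY0 : ∫ ω, Y ω ∂μ = 0) (a c : ℝ) :
    ∫ ω, (a * X ω + c * Y ω) ^ 2 ∂μ = a ^ 2 * ∫ ω, X ω ^ 2 ∂μ + c ^ 2 * ∫ ω, Y ω ^ 2 ∂μ := by
  have hXY0 : ∫ ω, X ω * Y ω ∂μ = 0 := by
    rw [hXY.integral_fun_mul_eq_mul_integral hX.1 hY.1, hY0, mul_zero]
  have hXYint : Integrable (fun ω => X ω * Y ω) μ := hX.integrable_mul hY
  calc ∫ ω, (a * X ω + c * Y ω) ^ 2 ∂μ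
      = ∫ ω, (a ^ 2 * X ω ^ 2 + 2 * a * c * (X ω * Y ω) + c ^ 2 * Y ω ^ 2) ∂μ := by
        congr 1 with ω; ring
    _ = a ^ 2 * ∫ ω, X ω ^ 2 ∂μ + 2 * a * c * ∫ ω, X ω * Y ω ∂μ + c ^ 2 * ∫ ω, Y ω ^ 2 ∂μ := by
        rw [integral_add ((hX.integrable_sq.const_mul _).fun_add (hXYint.const_mul _))
            (hY.integrable_sq.const_mul _),
          integral_add (hX.integrable_sq.const_mul _) (hXYint.const_mul _),
          integral_const_mul, integral_const_mul, integral_const_mul]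
    _ = _ := by rw [hXY0]; ring

lemma integral_sq_eq_integral_sub_sq [IsProbabilityMeasure μ] {X : Ω → ℝ} (m : ℝ)
    (hX : MemLp (fun ω => X ω - m) 2 μ) :
    ∫ ω, X ω ^ 2 ∂μ = ∫ ω, (X ω - m) ^ 2 ∂μ + 2 * m * ∫ ω, (X ω - m) ∂μ + m ^ 2 := by
  have hint : Integrable (fun ω => X ω - m) μ := hX.integrable one_le_two
  calc ∫ ω, X ω ^ 2 ∂μ = ∫ ω, ((X ω - m) ^ 2 + 2 * m * (X ω - m) + m ^ 2) ∂μ := by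
        congr 1 with ω; ring
    _ = _ := by
        rw [integral_add (hX.integrable_sq.fun_add (hint.const_mul _)) (integrable_const _),
          integral_add hX.integrable_sq (hint.const_mul _), integral_const_mul]
        simp

end Moments

def IsEMA {Ω : Type*} (β : ℕ → ℝ) (b s : ℕ → Ω → ℝ) : Prop :=
  ∀ t : ℕ, 1 ≤ t → ∀ ω, s (t + 1) ω = (1 - β t) * s t ω + β t * b t ω

namespace IsEMA

variable {Ω : Type*} {b s : ℕ → Ω → ℝ} {β : ℕ → ℝ}

lemma sub_succ (hs : IsEMA β b s) (m : ℝ) {t : ℕ} (ht : 1 ≤ t) (ω : Ω) :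
    s (t + 1) ω - m = (1 - β t) * (s t ω - m) + β t * (b t ω - m) := by
  rw [hs t ht]; ring

lemma measurable_iSup_comap (hs : IsEMA β b s) (hs1 : ∀ ω, s 1 ω = 0) :
    ∀ t, 1 ≤ t → Measurable[⨆ i ∈ Set.Iio t, MeasurableSpace.comap (b i) inferInstance] (s t) := by
  intro t ht
  induction t, ht using Nat.le_induction with
  | base =>
    rw [show s 1 = fun _ => 0 from funext hs1]
    exact measurable_const
  | succ n hn ih =>
    rw [show s (n + 1) = fun ω => (1 - β n) * s n ω + β n * b n ω from funext (hs n hn)]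
    have hpast : Measurable[⨆ i ∈ Set.Iio (n + 1), MeasurableSpace.comap (b i) inferInstance]
        (s n) := ih.mono (biSup_mono fun i hi => Set.mem_Iio.2 (Nat.lt_succ_of_lt hi)) le_rfl
    have hnow : Measurable[⨆ i ∈ Set.Iio (n + 1), MeasurableSpace.comap (b i) inferInstance]
        (b n) := (comap_measurable (b n)).mono
          (le_iSup₂ (f := fun i (_ : i ∈ Set.Iio (n + 1)) => MeasurableSpace.comap (b i) _) n
            (Set.mem_Iio.2 n.lt_succ_self)) le_rfl
    exact (hpast.const_mul _).add (hnow.const_mul _)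

variable [MeasurableSpace Ω] {μ : Measure Ω}

lemma indepFun (hs : IsEMA β b s) (hs1 : ∀ ω, s 1 ω = 0) (hmeas : ∀ t, Measurable (b t))
    (hindep : iIndepFun b μ) {t : ℕ} (ht : 1 ≤ t) : IndepFun (s t) (b t) μ := by
  have h := indep_iSup_of_disjoint (fun i => (hmeas i).comap_le)
    ((iIndepFun_iff_iIndep _ _ _).1 hindep) (S := Set.Iio t) (T := {t}) (by simp)
  rw [iSup_singleton] at h
  rw [IndepFun_iff_Indep]
  exact indep_of_indep_of_le_left h (measurable_iff_comap_le.1 (hs.measurable_iSup_comap hs1 t ht))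

variable [IsProbabilityMeasure μ] {m : ℝ}

lemma memLp_sub (hs : IsEMA β b s) (hs1 : ∀ ω, s 1 ω = 0)
    (hb : ∀ t, MemLp (fun ω => b t ω - m) 2 μ) :
    ∀ t, 1 ≤ t → MemLp (fun ω => s t ω - m) 2 μ := by
  intro t ht
  induction t, ht using Nat.le_induction with
  | base => simpa [hs1] using memLp_const (-m)
  | succ n hn ih =>
    simp_rw [hs.sub_succ m hn]
    exact (ih.const_mul _).add ((hb n).const_mul _)

lemma integral_sq_sub_succ (hs : IsEMA β b s) (hs1 : ∀ ω, s 1 ω = 0)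
    (hmeas : ∀ t, Measurable (b t)) (hindep : iIndepFun b μ)
    (hb : ∀ t, MemLp (fun ω => b t ω - m) 2 μ) (hb0 : ∀ t, ∫ ω, (b t ω - m) ∂μ = 0)
    {t : ℕ} (ht : 1 ≤ t) :
    ∫ ω, (s (t + 1) ω - m) ^ 2 ∂μ =
      (1 - β t) ^ 2 * ∫ ω, (s t ω - m) ^ 2 ∂μ + β t ^ 2 * ∫ ω, (b t ω - m) ^ 2 ∂μ := by
  simp_rw [hs.sub_succ m ht]
  have hcentered : IndepFun (fun ω => s t ω - m) (fun ω => b t ω - m) μ :=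
    (hs.indepFun hs1 hmeas hindep ht).comp (measurable_id.sub_const m)
      (measurable_id.sub_const m)
  exact integral_sq_add_of_indepFun hcentered (hs.memLp_sub hs1 hb t ht) (hb t) (hb0 t) _ _

lemma mul_integral_sub_nonpos (hs : IsEMA β b s) (hs1 : ∀ ω, s 1 ω = 0)
    (hβ : ∀ t, 1 ≤ t → β t ≤ 1) (hb : ∀ t, MemLp (fun ω => b t ω - m) 2 μ)
    (hb0 : ∀ t, ∫ ω, (b t ω - m) ∂μ = 0) :
    ∀ t, 1 ≤ t → m * ∫ ω, (s t ω - m) ∂μ ≤ 0 := by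
  intro t ht
  induction t, ht using Nat.le_induction with
  | base =>
    simpa only [hs1, zero_sub, integral_const, probReal_univ, smul_eq_mul, mul_neg, one_mul,
      Left.neg_nonpos_iff] using mul_self_nonneg m
  | succ n hn ih =>
    have hint := (hs.memLp_sub hs1 hb n hn).integrable one_le_two
    have hbint := (hb n).integrable one_le_two
    simp_rw [hs.sub_succ m hn]
    rw [integral_add (hint.const_mul _) (hbint.const_mul _), integral_const_mul,
      integral_const_mul, hb0, mul_zero, add_zero, mul_left_comm]
    exact mul_nonpos_of_nonneg_of_nonpos (sub_nonneg.2 (hβ n hn)) ih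

end IsEMA

theorem stmt_18_general {Ω : Type*} [MeasurableSpace Ω] (μP : Measure Ω) [IsProbabilityMeasure μP]
    (b : ℕ → Ω → ℝ) (m σb : ℝ)
    (hmeas : ∀ t, Measurable (b t))
    (hindep : iIndepFun b μP)
    (hmean : ∀ t, ∫ ω, b t ω ∂μP = m)
    (hvarInt : ∀ t, Integrable (fun ω => (b t ω - m) ^ 2) μP)
    (hvar : ∀ t, ∫ ω, (b t ω - m) ^ 2 ∂μP ≤ σb ^ 2)
    (c : ℝ) (hc1 : 1 / 2 < c) (hc2 : c ≤ 1)
    (β : ℕ → ℝ) (hβ : ∀ t : ℕ, β t = 1 / (t : ℝ) ^ c)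
    (s : ℕ → Ω → ℝ) (hs1 : ∀ ω, s 1 ω = 0)
    (hrec : ∀ t : ℕ, 1 ≤ t → ∀ ω, s (t + 1) ω = (1 - β t) * s t ω + β t * b t ω) :
    ∀ t : ℕ, 2 ≤ t →
      (∫ ω, (s t ω - m) ^ 2 ∂μP ≤ σb ^ 2 / ((t : ℝ) - 1) ^ c)
      ∧ (∫ ω, (s t ω) ^ 2 ∂μP ≤ m ^ 2 + σb ^ 2 / ((t : ℝ) - 1) ^ c) := by
  intro t ht
  have hs : IsEMA β b s := hrec
  have hc0 : 0 ≤ c := by linarith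
  have hβle : ∀ t, 1 ≤ t → β t ≤ 1 := fun t ht => by
    rw [hβ, div_le_one (by positivity)]
    exact Real.one_le_rpow (by exact_mod_cast ht) hc0
  have hb : ∀ t, MemLp (fun ω => b t ω - m) 2 μP := fun t =>
    (memLp_two_iff_integrable_sq ((hmeas t).sub_const m).aestronglyMeasurable).2 (hvarInt t)
  have hb0 : ∀ t, ∫ ω, (b t ω - m) ∂μP = 0 := fun t => by
    have hbint : Integrable (b t) μP := by
      simpa using ((hb t).integrable one_le_two).fun_add (integrable_const m)
    simp [integral_sub hbint (integrable_const m), hmean t]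
  have hV := le_div_sub_one_rpow_of_recursion (V := fun t => ∫ ω, (s t ω - m) ^ 2 ∂μP)
    hc0 hc2 (sq_nonneg σb) hβ hvar
    (fun t ht => hs.integral_sq_sub_succ hs1 hmeas hindep hb hb0 ht) t ht
  refine ⟨hV, ?_⟩
  rw [integral_sq_eq_integral_sub_sq m (hs.memLp_sub hs1 hb t (by omega))]
  linarith [hs.mul_integral_sub_nonpos hs1 hβle hb hb0 t (by omega)]

theorem stmt_18 {Ω : Type*} [MeasurableSpace Ω] (μP : Measure Ω) [IsProbabilityMeasure μP]
    (b : ℕ → Ω → ℝ) (m σb : ℝ) (hσb : 0 ≤ σb)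
    (hmeas : ∀ t, Measurable (b t))
    (hnn : ∀ t ω, 0 ≤ b t ω)
    (hindep : iIndepFun b μP)
    (hident : ∀ i j, Measure.map (b i) μP = Measure.map (b j) μP)
    (hInt : ∀ t, Integrable (b t) μP)
    (hmean : ∀ t, ∫ ω, b t ω ∂μP = m)
    (hvarInt : ∀ t, Integrable (fun ω => (b t ω - m) ^ 2) μP)
    (hvar : ∀ t, ∫ ω, (b t ω - m) ^ 2 ∂μP ≤ σb ^ 2)
    (c : ℝ) (hc1 : 1 / 2 < c) (hc2 : c ≤ 1)
    (β : ℕ → ℝ) (hβ : ∀ t : ℕ, β t = 1 / (t : ℝ) ^ c)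
    (s : ℕ → Ω → ℝ) (hs1 : ∀ ω, s 1 ω = 0)
    (hrec : ∀ t : ℕ, 1 ≤ t → ∀ ω, s (t + 1) ω = (1 - β t) * s t ω + β t * b t ω) :
    ∀ t : ℕ, 2 ≤ t →
      (∫ ω, (s t ω - m) ^ 2 ∂μP ≤ σb ^ 2 / ((t : ℝ) - 1) ^ c)
      ∧ (∫ ω, (s t ω) ^ 2 ∂μP ≤ m ^ 2 + σb ^ 2 / ((t : ℝ) - 1) ^ c) :=
  stmt_18_general μP b m σb hmeas hindep hmean hvarInt hvar c hc1 hc2 β hβ s hs1 hrec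
end
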